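/- arXiv:2105.00193 — 4 statements merged into one kernel-verified Lean document; each statement's English description precedes it below -/
import Mathlib

section
/- Consider the tournament on vertices x_1, …, x_n (n ≥ 3) in which x_i dominates x_j if and only if i − j ≥ 2 or j − i = 1. Then x_1 can reach every other vertex by a directed path, but there is no directed path from x_1 to x_n of length at most n − 2. -/
/-- There is a directed path of length `k` from `u` to `v`. -/
def HasPathLen {V : Type*} (dom : V → V → Prop) (u v : V) (k : ℕ) : Prop :=
  ∃ f : ℕ → V, f 0 = u ∧ f k = v ∧ ∀ i < k, dom (f i) (f (i + 1))

/-
Going up by one is always an edge, so `x_1 → x_2 → ⋯ → x_v` reaches every vertex.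
Conversely no edge raises the index by more than one, so any path from `x_1` to `x_n` has
length at least `n - 1`.
-/

namespace HasPathLen

variable {V : Type*} {dom : V → V → Prop}

theorem le_add_of_step_le (φ : V → ℕ) (hstep : ∀ u v, dom u v → φ v ≤ φ u + 1)
    {u v : V} {k : ℕ} (h : HasPathLen dom u v k) : φ v ≤ φ u + k := by
  obtain ⟨f, rfl, rfl, hf⟩ := h
  suffices ∀ i ≤ k, φ (f i) ≤ φ (f 0) + i from this k le_rfl
  intro i hi
  induction i with
  | zero => simp
  | succ j ih =>
    have := hstep _ _ (hf j hi)
    have := ih (by omega)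
    omega

end HasPathLen

theorem Fin.hasPathLen_zero_of_dom_succ {n : ℕ} [NeZero n] {dom : Fin n → Fin n → Prop}
    (hsucc : ∀ i j : Fin n, i.val + 1 = j.val → dom i j) (v : Fin n) :
    HasPathLen dom 0 v v.val :=
  ⟨fun i => ⟨min i v.val, by omega⟩, by ext; simp, by ext; simp,
    fun i hi => hsucc _ _ (by dsimp only; omega)⟩

/-- In the tournament on `x_1, …, x_n` (`n ≥ 3`, zero-indexed here as `Fin n`) where
`x_i ≻ x_j` iff `i - j ≥ 2` or `j - i = 1`, vertex `x_1` can reach every other vertex,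
but cannot reach `x_n` via a path of length at most `n - 2`. -/
theorem stmt5 (n : ℕ) (hn : 3 ≤ n)
    (dom : Fin n → Fin n → Prop)
    (hdom : ∀ i j : Fin n, dom i j ↔ (j.val + 2 ≤ i.val ∨ i.val + 1 = j.val)) :
    (∀ v : Fin n, v ≠ ⟨0, by omega⟩ → ∃ m : ℕ, HasPathLen dom ⟨0, by omega⟩ v m) ∧
    ¬ (∃ m ≤ n - 2, HasPathLen dom ⟨0, by omega⟩ ⟨n - 1, by omega⟩ m) := by
  have : NeZero n := ⟨by omega⟩
  constructor
  · exact fun v _ => ⟨v.val, Fin.hasPathLen_zero_of_dom_succ (fun i j h => (hdom i j).2 (.inr h)) v⟩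
  · rintro ⟨m, hm, hpath⟩
    have hlen := hpath.le_add_of_step_le Fin.val fun i j h => by have := (hdom i j).1 h; omega
    simp only [zero_add, tsub_le_iff_right] at hlen
    omega
end

section
/- Let S be a finite set of size t, and pick a subset S₁ of S uniformly at random among all 2^t subsets, with S₂ = S \ S₁. Fix a tournament structure on S and let z_1, …, z_t be the elements of S in nondecreasing order of outdegree within S. Then the probability that S₁ ≻ S₂ (every element of S₁ dominates every element of S₂) is at most (t+1)/2^t. -/
/-!
If `A` and `B` both dominate their complements in `S` and neither contains the other, pick
`a ∈ A \ B` and `b ∈ B \ A`; then `a` dominates `b` and `b` dominates `a`, against asymmetry.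
So the dominating subsets form a chain under inclusion, and a chain of subsets of `S` has
pairwise distinct cardinalities in `{0, …, |S|}`.
-/

open Finset

theorem Finset.card_le_card_add_one_of_isChain {α : Type*} {s : Finset α}
    {𝒜 : Finset (Finset α)} (h𝒜 : 𝒜 ⊆ s.powerset) (hchain : IsChain (· ⊆ ·) (𝒜 : Set (Finset α))) :
    #𝒜 ≤ #s + 1 := by
  have hinj : Set.InjOn card (𝒜 : Set (Finset α)) := fun A hA B hB hAB =>
    (hchain.total hA hB).elim (eq_of_subset_of_card_le · hAB.ge)
      (fun hBA => (eq_of_subset_of_card_le hBA hAB.le).symm)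
  have hmaps : Set.MapsTo card (𝒜 : Set (Finset α)) (range (#s + 1) : Set ℕ) := fun A hA =>
    mem_range_succ_iff.mpr (card_le_card (mem_powerset.mp (h𝒜 hA)))
  simpa using card_le_card_of_injOn card hmaps hinj

theorem isChain_filter_forall_mem_sdiff {α : Type*} [DecidableEq α] {r : α → α → Prop}
    [DecidableRel r] (hasymm : ∀ x y, r x y → ¬ r y x) (S : Finset α) :
    IsChain (· ⊆ ·)
      ((S.powerset.filter fun A => ∀ a ∈ A, ∀ b ∈ S \ A, r a b : Finset (Finset α)) :
        Set (Finset α)) := by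
  intro A hA B hB _
  simp only [coe_filter, mem_powerset, Set.mem_ofPred_eq] at hA hB
  by_contra! hincomp
  obtain ⟨a, haA, haB⟩ := not_subset.mp hincomp.1
  obtain ⟨b, hbB, hbA⟩ := not_subset.mp hincomp.2
  exact hasymm a b (hA.2 a haA b (mem_sdiff.mpr ⟨hB.1 hbB, hbA⟩))
    (hB.2 b hbB a (mem_sdiff.mpr ⟨hA.1 haA, haB⟩))

theorem stmt9_general {V : Type*} [DecidableEq V]
    (dom : V → V → Prop) [DecidableRel dom]
    (hasym : ∀ x y, dom x y → ¬ dom y x)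
    (S : Finset V) :
    (((S.powerset.filter (fun S1 => ∀ a ∈ S1, ∀ b ∈ S \ S1, dom a b)).card : ℝ))
        / 2 ^ S.card
      ≤ ((S.card : ℝ) + 1) / 2 ^ S.card := by
  have hcard := card_le_card_add_one_of_isChain (filter_subset _ _)
    (isChain_filter_forall_mem_sdiff hasym S)
  gcongr
  exact_mod_cast hcard

/-- Pick `S₁ ⊆ S` uniformly at random among all `2^t` subsets (`t = |S|`), and set
`S₂ = S \ S₁`. The probability that `S₁ ≻ S₂` is at most `(t+1)/2^t`.
Formalized by counting: the number of subsets `S₁` of `S` with `S₁ ≻ S \ S₁`, divided by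
`2^t`, is at most `(t+1)/2^t`. -/
theorem stmt9 {V : Type*} [DecidableEq V]
    (dom : V → V → Prop) [DecidableRel dom]
    (hasym : ∀ x y, dom x y → ¬ dom y x)
    (htotal : ∀ x y, x ≠ y → dom x y ∨ dom y x)
    (S : Finset V) :
    (((S.powerset.filter (fun S1 => ∀ a ∈ S1, ∀ b ∈ S \ S1, dom a b)).card : ℝ))
        / 2 ^ S.card
      ≤ ((S.card : ℝ) + 1) / 2 ^ S.card :=
  stmt9_general dom hasym S
end

section
/- Let T be a tournament and suppose D and D_inv are sets of vertices, x is a vertex, and the following hold: (E1) for every vertex m ∉ D there exists i ∈ D with i dominating m; (E2) for every vertex ℓ ∉ D_inv there exists j ∈ D_inv with ℓ dominating j; (E3) for every i ∈ D and j ∈ D_inv there is a directed path from j to i of length at most 3. Then every vertex of T is a 5-king. -/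
namespace HasPathLen

variable {V : Type*} {dom : V → V → Prop}

lemma refl (u : V) : HasPathLen dom u u 0 :=
  ⟨fun _ => u, rfl, rfl, by omega⟩

lemma single {u v : V} (h : dom u v) : HasPathLen dom u v 1 :=
  ⟨fun k => if k = 0 then u else v, rfl, rfl, fun i hi => by
    obtain rfl : i = 0 := by omega
    simpa⟩

lemma trans {a b c : V} {m n : ℕ} (h₁ : HasPathLen dom a b m) (h₂ : HasPathLen dom b c n) :
    HasPathLen dom a c (m + n) := by
  obtain ⟨f, rfl, rfl, hf⟩ := h₁
  obtain ⟨g, hg0, rfl, hg⟩ := h₂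
  refine ⟨fun k => if k ≤ m then f k else g (k - m), by simp, ?_, fun i hi => ?_⟩
  · rcases Nat.eq_zero_or_pos n with rfl | hn
    · simp [hg0]
    · simp [show ¬ m + n ≤ m by omega]
  · rcases lt_trichotomy i m with hlt | rfl | hgt
    · simpa [hlt.le, Nat.succ_le_of_lt hlt] using hf i hlt
    · simpa [hg0] using hg 0 (by omega)
    · have := hg (i - m) (by omega)
      simpa [hgt.not_ge, show ¬ i + 1 ≤ m by omega, Nat.sub_add_comm hgt.le] using this

end HasPathLen

section

variable {V : Type*} {dom : V → V → Prop} {S : Set V}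

lemma exists_mem_hasPathLen_le_one_to (hS : ∀ l ∉ S, ∃ j ∈ S, dom l j) (u : V) :
    ∃ j ∈ S, ∃ a ≤ 1, HasPathLen dom u j a := by
  by_cases hu : u ∈ S
  · exact ⟨u, hu, 0, zero_le_one, .refl u⟩
  · obtain ⟨j, hj, huj⟩ := hS u hu
    exact ⟨j, hj, 1, le_rfl, .single huj⟩

lemma exists_mem_hasPathLen_le_one_from (hS : ∀ m ∉ S, ∃ i ∈ S, dom i m) (v : V) :
    ∃ i ∈ S, ∃ b ≤ 1, HasPathLen dom i v b := by
  by_cases hv : v ∈ S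
  · exact ⟨v, hv, 0, zero_le_one, .refl v⟩
  · obtain ⟨i, hi, hiv⟩ := hS v hv
    exact ⟨i, hi, 1, le_rfl, .single hiv⟩

end

theorem stmt12_general {V : Type*}
    (dom : V → V → Prop)
    (D Dinv : Set V)
    (hE1 : ∀ m : V, m ∉ D → ∃ i ∈ D, dom i m)
    (hE2 : ∀ l : V, l ∉ Dinv → ∃ j ∈ Dinv, dom l j)
    (hE3 : ∀ i ∈ D, ∀ j ∈ Dinv, ∃ m ≤ 3, HasPathLen dom j i m) :
    ∀ u v : V, u ≠ v → ∃ m ≤ 5, HasPathLen dom u v m := by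
  intro u v _
  obtain ⟨j, hj, a, ha, huj⟩ := exists_mem_hasPathLen_le_one_to hE2 u
  obtain ⟨i, hi, b, hb, hiv⟩ := exists_mem_hasPathLen_le_one_from hE1 v
  obtain ⟨c, hc, hji⟩ := hE3 i hi j hj
  exact ⟨a + c + b, by omega, (huj.trans hji).trans hiv⟩

/-- If (E1) every vertex outside `D` is dominated by some vertex of `D`, (E2) every vertex
outside `D_inv` dominates some vertex of `D_inv`, and (E3) from every `j ∈ D_inv` to every
`i ∈ D` there is a path of length at most 3, then every vertex is a 5-king. -/
theorem stmt12 {V : Type*}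
    (dom : V → V → Prop)
    (hasym : ∀ x y, dom x y → ¬ dom y x)
    (htotal : ∀ x y, x ≠ y → dom x y ∨ dom y x)
    (D Dinv : Set V)
    (hE1 : ∀ m : V, m ∉ D → ∃ i ∈ D, dom i m)
    (hE2 : ∀ l : V, l ∉ Dinv → ∃ j ∈ Dinv, dom l j)
    (hE3 : ∀ i ∈ D, ∀ j ∈ Dinv, ∃ m ≤ 3, HasPathLen dom j i m) :
    ∀ u v : V, u ≠ v → ∃ m ≤ 5, HasPathLen dom u v m :=
  stmt12_general dom D Dinv hE1 hE2 hE3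
end

section
/- Let n = 2^r and let T be a tournament on n vertices with a distinguished vertex x. Suppose there exist distinct vertices y_1, …, y_r, all dominated by x, and a partition of V \ {x} into sets V_1, …, V_r with |V_i| = 2^{i-1}, y_i ∈ V_i, and y_i a single-elimination winner of the tournament restricted to V_i for every i. Then x is a single-elimination winner of T. -/
/-!
The bracket is built round by round. After `k` rounds, `x` has won a bracket on
`{x} ∪ V₀ ∪ ⋯ ∪ V_{k-1}`, a set of size `2^k`; in round `k + 1` it meets the winner `y_k`
of a bracket on the disjoint set `V_k`, also of size `2^k`, and beats it.
-/

/-- `IsSEWinner dom k W x`: `x` wins a balanced single-elimination tournament (of `k` rounds)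
under some bracket on the vertex set `W` (which should have size `2^k`), where match
outcomes are given by the dominance relation `dom`. -/
def IsSEWinner {V : Type*} [DecidableEq V] (dom : V → V → Prop) :
    ℕ → Finset V → V → Prop
  | 0, W, x => W = {x}
  | (k + 1), W, x => ∃ A B : Finset V, A ∪ B = W ∧ Disjoint A B ∧
      A.card = 2 ^ k ∧ B.card = 2 ^ k ∧
      IsSEWinner dom k A x ∧ ∃ y, IsSEWinner dom k B y ∧ dom x y

open Finset Function

namespace IsSEWinner

variable {V : Type*} [DecidableEq V] {dom : V → V → Prop}

theorem card_eq {k : ℕ} {W : Finset V} {x : V} (h : IsSEWinner dom k W x) : #W = 2 ^ k := by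
  cases k with
  | zero => simp [show W = {x} from h]
  | succ k =>
    obtain ⟨A, B, rfl, hAB, hA, hB, -⟩ := h
    rw [card_union_of_disjoint hAB, hA, hB, pow_succ, mul_two]

theorem union {k : ℕ} {A B : Finset V} {x y : V} (hA : IsSEWinner dom k A x)
    (hB : IsSEWinner dom k B y) (hAB : Disjoint A B) (hxy : dom x y) :
    IsSEWinner dom (k + 1) (A ∪ B) x :=
  ⟨A, B, rfl, hAB, hA.card_eq, hB.card_eq, hA, y, hB, hxy⟩

end IsSEWinner

theorem isSEWinner_insert_biUnion {V : Type*} [DecidableEq V] {dom : V → V → Prop} {x : V} :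
    ∀ {r : ℕ} (Vs : Fin r → Finset V) (y : Fin r → V), (∀ i, x ∉ Vs i) →
      Pairwise (Disjoint on Vs) → (∀ i : Fin r, IsSEWinner dom i (Vs i) (y i)) →
      (∀ i, dom x (y i)) → IsSEWinner dom r (insert x (univ.biUnion Vs)) x
  | 0, Vs, _, _, _, _, _ => by simp [IsSEWinner]
  | r + 1, Vs, y, hx, hdisj, hwin, hdom => by
    have hprefix := isSEWinner_insert_biUnion (Vs ∘ Fin.castSucc) (y ∘ Fin.castSucc)
      (fun _ => hx _) (hdisj.comp_of_injective (Fin.castSucc_injective r))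
      (fun i => hwin i.castSucc) (fun _ => hdom _)
    have hsplit : insert x (univ.biUnion Vs) =
        insert x (univ.biUnion (Vs ∘ Fin.castSucc)) ∪ Vs (Fin.last r) := by
      rw [Fin.univ_castSuccEmb, cons_eq_insert, biUnion_insert, map_eq_image, image_biUnion,
        union_comm, insert_union]
      rfl
    have hdisj_last :
        Disjoint (insert x (univ.biUnion (Vs ∘ Fin.castSucc))) (Vs (Fin.last r)) := by
      simp [hx, disjoint_biUnion_left, fun i => hdisj (Fin.castSucc_lt_last i).ne]
    rw [hsplit]
    exact hprefix.union (hwin (Fin.last r)) hdisj_last (hdom _)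

theorem stmt15_general {V : Type*} [Fintype V] [DecidableEq V]
    (dom : V → V → Prop)
    (r : ℕ)
    (x : V) (y : Fin r → V)
    (hdomy : ∀ i, dom x (y i))
    (Vs : Fin r → Finset V)
    (hnotx : ∀ i, x ∉ Vs i)
    (hpart : ∀ v : V, v ≠ x → ∃! i : Fin r, v ∈ Vs i)
    (hwin : ∀ i : Fin r, IsSEWinner dom (i : ℕ) (Vs i) (y i)) :
    IsSEWinner dom r Finset.univ x := by
  have hdisj : Pairwise (Disjoint on Vs) := fun i j hij => disjoint_left.2 fun v hvi hvj =>
    hij ((hpart v fun hv => hnotx i (hv ▸ hvi)).unique hvi hvj)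
  have hcover : insert x (univ.biUnion Vs) = univ := eq_univ_of_forall fun v => by
    rcases eq_or_ne v x with rfl | hv
    · exact mem_insert_self v _
    · obtain ⟨i, hi, -⟩ := hpart v hv
      exact mem_insert_of_mem (mem_biUnion.2 ⟨i, mem_univ i, hi⟩)
  simpa only [hcover] using isSEWinner_insert_biUnion Vs y hnotx hdisj hwin hdomy

/-- Let `n = 2^r`, and suppose `x` dominates distinct vertices `y_1, …, y_r` and
`V \ {x}` is partitioned into sets `V_1, …, V_r` with `|V_i| = 2^{i-1}`, `y_i ∈ V_i`, and
`y_i` a single-elimination winner of the restriction to `V_i`. Then `x` is a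
single-elimination winner of the whole tournament. (Zero-indexed: `Vs i` has size `2^i`.) -/
theorem stmt15 {V : Type*} [Fintype V] [DecidableEq V]
    (dom : V → V → Prop) [DecidableRel dom]
    (hasym : ∀ x y, dom x y → ¬ dom y x)
    (htotal : ∀ x y, x ≠ y → dom x y ∨ dom y x)
    (r : ℕ) (hcard : Fintype.card V = 2 ^ r)
    (x : V) (y : Fin r → V) (hyinj : Function.Injective y)
    (hdomy : ∀ i, dom x (y i))
    (Vs : Fin r → Finset V)
    (hnotx : ∀ i, x ∉ Vs i)
    (hpart : ∀ v : V, v ≠ x → ∃! i : Fin r, v ∈ Vs i)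
    (hcardVs : ∀ i : Fin r, (Vs i).card = 2 ^ (i : ℕ))
    (hyi : ∀ i, y i ∈ Vs i)
    (hwin : ∀ i : Fin r, IsSEWinner dom (i : ℕ) (Vs i) (y i)) :
    IsSEWinner dom r Finset.univ x :=
  stmt15_general dom r x y hdomy Vs hnotx hpart hwin
end
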